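/- (Theorem 1, unique stationary point) Let ĉ = S∘h : A → ℝ^K be Fréchet differentiable on A ⊆ ℝ^K, satisfying the lower bound ‖ĉ(θ₁)−ĉ(θ₂)‖ ≥ α‖θ₁−θ₂‖ with α > 0 for all θ₁,θ₂ ∈ A. Define ε(θ) = (1/2)‖ĉ(θ) − ĉ(θ₀)‖². Then ∇ε(θ₁) = 0 for θ₁ ∈ A implies θ₁ = θ₀. -/

import Mathlib

/-!
Differentiating the lower bound `α ‖θ - θ₁‖ ≤ ‖ĉ θ - ĉ θ₁‖` along rays through `θ₁` gives
`α ‖v‖ ≤ ‖Dĉ(θ₁) v‖`, so `Dĉ(θ₁)` is injective, hence invertible on the finite-dimensional space,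
and its adjoint is injective as well. The gradient `∇ε(θ₁) = Dĉ(θ₁)* (ĉ θ₁ - ĉ θ₀)` can therefore
only vanish when `ĉ θ₁ = ĉ θ₀`, and the lower bound at `(θ₁, θ₀)` then forces `θ₁ = θ₀`.
-/

open Filter Topology
open scoped Gradient

theorem HasFDerivAt.mul_norm_le_norm_apply {E F : Type*} [NormedAddCommGroup E] [NormedSpace ℝ E]
    [NormedAddCommGroup F] [NormedSpace ℝ F] {f : E → F} {f' : E →L[ℝ] F} {x : E} {s : Set E}
    (hf : HasFDerivAt f f' x) (hs : s ∈ 𝓝 x) {α : ℝ}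
    (hlow : ∀ y ∈ s, α * ‖y - x‖ ≤ ‖f y - f x‖) (v : E) :
    α * ‖v‖ ≤ ‖f' v‖ := by
  have hline : HasDerivAt (fun t : ℝ ↦ f (x + t • v)) (f' v) 0 := by
    have hf₀ : HasFDerivAt f f' (x + (0 : ℝ) • v) := by simpa using hf
    simpa [Function.comp_def] using
      hf₀.comp_hasDerivAt 0 (((hasDerivAt_id (0 : ℝ)).smul_const v).const_add x)
  have hmem : ∀ᶠ t : ℝ in 𝓝[≠] 0, x + t • v ∈ s ∧ t ≠ 0 := by
    refine (Eventually.filter_mono nhdsWithin_le_nhds ?_).and self_mem_nhdsWithin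
    exact (Continuous.tendsto (by fun_prop) 0).eventually (by simpa using hs)
  refine ge_of_tendsto hline.tendsto_slope_zero.norm (hmem.mono fun t ⟨hts, ht⟩ ↦ ?_)
  have := hlow _ hts
  simp only [zero_add, zero_smul, add_zero, add_sub_cancel_left, norm_smul, norm_inv] at this ⊢
  rw [le_inv_mul_iff₀ (norm_pos_iff.mpr ht)]
  linarith

theorem ContinuousLinearMap.injective_adjoint {E : Type*} [NormedAddCommGroup E]
    [InnerProductSpace ℝ E] [FiniteDimensional ℝ E] {T : E →L[ℝ] E}
    (hT : Function.Injective T) : Function.Injective (ContinuousLinearMap.adjoint T) := by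
  have hrange : T.range = ⊤ :=
    LinearMap.range_eq_top.mpr (LinearMap.injective_iff_surjective.mp hT)
  rw [← coe_coe, ← LinearMap.ker_eq_bot, ← orthogonal_range, hrange,
    Submodule.top_orthogonal_eq_bot]

theorem HasFDerivAt.hasGradientAt_half_norm_sub_sq {E F : Type*} [NormedAddCommGroup E]
    [InnerProductSpace ℝ E] [CompleteSpace E] [NormedAddCommGroup F] [InnerProductSpace ℝ F]
    [CompleteSpace F] {f : E → F} {f' : E →L[ℝ] F} {x : E} (hf : HasFDerivAt f f' x) (a : F) :
    HasGradientAt (fun y ↦ (1 / 2) * ‖f y - a‖ ^ 2)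
      (ContinuousLinearMap.adjoint f' (f x - a)) x := by
  rw [hasGradientAt_iff_hasFDerivAt]
  refine ((hf.sub_const a).norm_sq.const_mul (1 / 2 : ℝ)).congr_fderiv ?_
  ext v
  simp [ContinuousLinearMap.adjoint_inner_left, -map_sub]

/-- Theorem 1: the LS objective has a unique stationary point. -/
theorem stmt_7 {K : ℕ}
    (A : Set (EuclideanSpace ℝ (Fin K))) (hA : IsOpen A)
    (c : EuclideanSpace ℝ (Fin K) → EuclideanSpace ℝ (Fin K))
    (Dc : EuclideanSpace ℝ (Fin K) → (EuclideanSpace ℝ (Fin K) →L[ℝ] EuclideanSpace ℝ (Fin K)))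
    (hderiv : ∀ θ ∈ A, HasFDerivAt c (Dc θ) θ)
    (α : ℝ) (hα : 0 < α)
    (hlow : ∀ θ₁ ∈ A, ∀ θ₂ ∈ A, α * ‖θ₁ - θ₂‖ ≤ ‖c θ₁ - c θ₂‖)
    (θ₀ : EuclideanSpace ℝ (Fin K)) (hθ₀ : θ₀ ∈ A)
    (ε : EuclideanSpace ℝ (Fin K) → ℝ)
    (hε : ∀ θ, ε θ = (1 / 2) * ‖c θ - c θ₀‖ ^ 2)
    (θ₁ : EuclideanSpace ℝ (Fin K)) (hθ₁ : θ₁ ∈ A)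
    (hstat : gradient ε θ₁ = 0) :
    θ₁ = θ₀ := by
  have hDc_inj : Function.Injective (Dc θ₁) := by
    refine (injective_iff_map_eq_zero _).2 fun v hv ↦ norm_le_zero_iff.mp ?_
    have hbound := (hderiv θ₁ hθ₁).mul_norm_le_norm_apply (hA.mem_nhds hθ₁)
      (fun θ hθ ↦ hlow θ hθ θ₁ hθ₁) v
    rw [hv, norm_zero] at hbound
    exact nonpos_of_mul_nonpos_right hbound hα
  have hgrad : ∇ ε θ₁ = ContinuousLinearMap.adjoint (Dc θ₁) (c θ₁ - c θ₀) := by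
    rw [funext hε]
    exact ((hderiv θ₁ hθ₁).hasGradientAt_half_norm_sub_sq _).gradient
  have hc : c θ₁ - c θ₀ = 0 :=
    ContinuousLinearMap.injective_adjoint hDc_inj (by rw [← hgrad, hstat, map_zero])
  have hbound := hlow θ₁ hθ₁ θ₀ hθ₀
  rw [hc, norm_zero] at hbound
  exact sub_eq_zero.mp (norm_le_zero_iff.mp (nonpos_of_mul_nonpos_right hbound hα))
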